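/- Let K be a linear subspace of ℝ^N and μ* ∈ ℝ₊^N with (μ* + K) ∩ ℝ₊^N = {μ*}. Then there exists C > 0 such that ‖π_{K⊥}(ν − μ*)‖ ≥ C ‖ν − μ*‖ for all ν ∈ ℝ₊^N, where π_{K⊥} is the orthogonal projection onto the orthogonal complement of K. -/

import Mathlib

/-!
Write `P` for the cone of directions `y` with `y i ≥ 0` whenever `μ i = 0`; it contains `ν - μ`
for every `ν ≥ 0`. If `v ∈ K ∩ P`, then `μ + t v ≥ 0` for small `t > 0`, so `t v = 0` by the
hypothesis; hence `K ∩ P = {0}`. As `K` is the kernel of `π_{K⊥}`, the continuous function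
`y ↦ ‖π_{K⊥} y‖` has a positive lower bound `C` on the compact set `P ∩ S^{N-1}`, which
extends to `C ‖y‖` on all of `P` by homogeneity.
-/

open Filter Topology

theorem ContinuousLinearMap.exists_pos_mul_norm_le_norm_apply_on_cone
    {E F : Type*} [NormedAddCommGroup E] [NormedSpace ℝ E] [ProperSpace E]
    [NormedAddCommGroup F] [NormedSpace ℝ F] (L : E →L[ℝ] F) {P : Set E} (hP : IsClosed P)
    (hsmul : ∀ y ∈ P, ∀ t : ℝ, 0 < t → t • y ∈ P) (hL : ∀ y ∈ P, L y = 0 → y = 0) :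
    ∃ C > 0, ∀ y ∈ P, C * ‖y‖ ≤ ‖L y‖ := by
  have hpos : ∀ y ∈ P ∩ Metric.sphere 0 1, 0 < ‖L y‖ := by
    rintro y ⟨hyP, hy⟩
    refine norm_pos_iff.2 fun hLy => ?_
    simp [hL y hyP hLy] at hy
  obtain ⟨C, hC, hmin⟩ := ((isCompact_sphere (0 : E) 1).inter_left hP).exists_forall_le'
    L.continuous.norm.continuousOn hpos
  refine ⟨C, hC, fun y hy => ?_⟩
  rcases eq_or_ne y 0 with rfl | hy0
  · simp
  have hny : 0 < ‖y‖ := norm_pos_iff.2 hy0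
  have hunit := hmin (‖y‖⁻¹ • y) ⟨hsmul y hy _ (inv_pos.2 hny), by simp [norm_smul, hy0]⟩
  rw [map_smul, norm_smul, norm_inv, norm_norm, le_inv_mul_iff₀ hny] at hunit
  rwa [mul_comm]

section FeasibleCone

variable {ι : Type*}

/-- The directions in which one can move from `μ` without immediately leaving `ℝ₊^ι`,
provided `μ ≥ 0`. -/
def feasibleCone (μ : EuclideanSpace ℝ ι) : Set (EuclideanSpace ℝ ι) :=
  {y | ∀ i, μ i = 0 → 0 ≤ y i}

theorem isClosed_feasibleCone (μ : EuclideanSpace ℝ ι) : IsClosed (feasibleCone μ) := by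
  simp only [feasibleCone, Set.ofPred_forall]
  exact isClosed_iInter fun i => isClosed_iInter fun _ =>
    isClosed_le continuous_const (EuclideanSpace.proj i).continuous

theorem smul_mem_feasibleCone {μ y : EuclideanSpace ℝ ι} (hy : y ∈ feasibleCone μ) {t : ℝ}
    (ht : 0 ≤ t) : t • y ∈ feasibleCone μ := fun i hi => by
  simpa using mul_nonneg ht (hy i hi)

theorem sub_mem_feasibleCone {μ ν : EuclideanSpace ℝ ι} (hν : ∀ i, 0 ≤ ν i) :
    ν - μ ∈ feasibleCone μ := fun i hi => by
  simpa [hi] using hν i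

theorem exists_pos_nonneg_add_smul_of_mem_feasibleCone [Finite ι] {μ v : EuclideanSpace ℝ ι}
    (hμ : ∀ i, 0 ≤ μ i) (hv : v ∈ feasibleCone μ) : ∃ t > 0, ∀ i, 0 ≤ μ i + t * v i := by
  have hsmall : ∀ i, ∀ᶠ t in 𝓝[>] (0 : ℝ), 0 ≤ μ i + t * v i := by
    intro i
    rcases (hμ i).eq_or_lt with hzero | hpos
    · filter_upwards [self_mem_nhdsWithin] with t ht
      simpa [← hzero] using mul_nonneg (le_of_lt ht) (hv i hzero.symm)
    · have hcont : ContinuousAt (fun t : ℝ => μ i + t * v i) 0 := by fun_prop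
      filter_upwards [nhdsWithin_le_nhds (continuousAt_const.eventually_lt hcont (by simpa))]
        with t ht using le_of_lt ht
  obtain ⟨t, hall, ht⟩ := ((eventually_all.2 hsmall).and self_mem_nhdsWithin).exists
  exact ⟨t, ht, hall⟩

theorem eq_zero_of_mem_feasibleCone [Finite ι] {μ : EuclideanSpace ℝ ι} (hμ : ∀ i, 0 ≤ μ i)
    {K : Submodule ℝ (EuclideanSpace ℝ ι)} (hK : ∀ v ∈ K, (∀ i, 0 ≤ μ i + v i) → v = 0)
    {v : EuclideanSpace ℝ ι} (hvK : v ∈ K) (hv : v ∈ feasibleCone μ) : v = 0 := by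
  obtain ⟨t, ht, hnonneg⟩ := exists_pos_nonneg_add_smul_of_mem_feasibleCone hμ hv
  have htv : t • v = 0 := hK _ (K.smul_mem t hvK) (by simpa using hnonneg)
  exact (smul_eq_zero.1 htv).resolve_left ht.ne'

end FeasibleCone

/-- Geometric claim: if `(μ + K) ∩ ℝ₊ᴺ = {μ}` for a subspace `K`, then the orthogonal
projection onto `Kᗮ` is bounded below on cone directions:
`‖π_{K⊥}(ν - μ)‖ ≥ C ‖ν - μ‖` for all `ν ≥ 0`. -/
theorem stmt_7 {N : ℕ} (K : Submodule ℝ (EuclideanSpace ℝ (Fin N)))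
    (μ : EuclideanSpace ℝ (Fin N)) (hμ : ∀ i, 0 ≤ μ i)
    (hK : ∀ v ∈ K, (∀ i, 0 ≤ μ i + v i) → v = 0) :
    ∃ C > 0, ∀ ν : EuclideanSpace ℝ (Fin N), (∀ i, 0 ≤ ν i) →
      C * ‖ν - μ‖ ≤ ‖(Submodule.orthogonalProjectionOnto Kᗮ (ν - μ) : EuclideanSpace ℝ (Fin N))‖ := by
  have hker : ∀ y, Kᗮ.orthogonalProjectionOnto y = 0 → y ∈ K := fun y hy => by
    rwa [Submodule.orthogonalProjectionOnto_eq_zero_iff, Submodule.orthogonal_orthogonal] at hy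
  obtain ⟨C, hC, hbound⟩ := Kᗮ.orthogonalProjectionOnto.exists_pos_mul_norm_le_norm_apply_on_cone
    (isClosed_feasibleCone μ) (fun y hy t ht => smul_mem_feasibleCone hy ht.le)
    (fun y hy hproj => eq_zero_of_mem_feasibleCone hμ hK (hker y hproj) hy)
  exact ⟨C, hC, fun ν hν => hbound _ (sub_mem_feasibleCone hν)⟩
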